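/- Every ss-characterized precompact Hausdorff abelian group is hereditarily disconnected, i.e., the connected component of 0 is the trivial subgroup {0}. -/

import Mathlib

open Filter Topology

noncomputable section

namespace SSChar

/-- The circle group `𝕋 = ℝ/ℤ`. -/
abbrev Torus : Type := AddCircle (1 : ℝ)

variable {G : Type*}

/-- The covering condition defining precompactness (total boundedness) of a group
topology: every neighborhood `U` of `0` admits a finite set `F` with `G = F + U`. -/
def PrecompactCover [AddCommGroup G] (t : TopologicalSpace G) : Prop :=
  ∀ U ∈ @nhds G t 0, ∃ F : Set G, F.Finite ∧ ∀ x : G, ∃ f ∈ F, x - f ∈ U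

/-- `t` is a Hausdorff group topology on `G`. -/
def IsHausdorffGroupTopology [AddCommGroup G] (t : TopologicalSpace G) : Prop :=
  @IsTopologicalAddGroup G t _ ∧ @T2Space G t

/-- `t` is a precompact Hausdorff group topology on `G`. -/
def IsPrecompactGroupTopology [AddCommGroup G] (t : TopologicalSpace G) : Prop :=
  IsHausdorffGroupTopology t ∧ PrecompactCover t

/-- The sequence `u` converges to `0` in the topology `t`. -/
def ConvergesToZero [AddCommGroup G] (t : TopologicalSpace G) (u : ℕ → G) : Prop :=
  Filter.Tendsto u Filter.atTop (@nhds G t 0)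

/-- `u` is a TB-sequence: some precompact Hausdorff group topology makes `u → 0`. -/
def IsTBSequence [AddCommGroup G] (u : ℕ → G) : Prop :=
  ∃ t : TopologicalSpace G, IsPrecompactGroupTopology t ∧ ConvergesToZero t u

/-- `t` is the finest precompact Hausdorff group topology in which `u → 0`,
i.e. `t = τ_u`.  (Recall that in Mathlib's order on topologies, finer means `≤`.) -/
def IsTauU [AddCommGroup G] (u : ℕ → G) (t : TopologicalSpace G) : Prop :=
  IsPrecompactGroupTopology t ∧ ConvergesToZero t u ∧
    ∀ t' : TopologicalSpace G, IsPrecompactGroupTopology t' → ConvergesToZero t' u → t ≤ t'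

/-- `t` is the finest Hausdorff group topology in which `u → 0`, i.e. `t = 𝒯_u`. -/
def IsTTu [AddCommGroup G] (u : ℕ → G) (t : TopologicalSpace G) : Prop :=
  IsHausdorffGroupTopology t ∧ ConvergesToZero t u ∧
    ∀ t' : TopologicalSpace G, IsHausdorffGroupTopology t' → ConvergesToZero t' u → t ≤ t'

/-- `(G, t)` is single-sequence characterized: `t = τ_u` for some (TB-)sequence `u`. -/
def SSCharacterized [AddCommGroup G] (t : TopologicalSpace G) : Prop :=
  ∃ u : ℕ → G, IsTauU u t

/-- `χ` is a `t`-continuous character of `G`. -/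
def IsContChar [AddCommGroup G] (t : TopologicalSpace G) (χ : G →+ Torus) : Prop :=
  @Continuous G Torus t _ χ

/-- The group of `t`-continuous characters of `G`. -/
def charGroup (G : Type*) [AddCommGroup G] (t : TopologicalSpace G) : Type _ :=
  {χ : G →+ Torus // IsContChar t χ}

/-- The compact-open topology on the character group: this makes it the
Pontryagin dual `(G,t)^∧`. -/
def charTopology (G : Type*) [AddCommGroup G] (t : TopologicalSpace G) :
    TopologicalSpace (charGroup G t) :=
  TopologicalSpace.generateFrom
    { S | ∃ (K : Set G) (U : Set Torus), @IsCompact G t K ∧ IsOpen U ∧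
        S = { χ : charGroup G t | ∀ x ∈ K, χ.1 x ∈ U } }

/-- The Bohr modification `t⁺` of `t`: the initial topology induced by all
`t`-continuous characters. -/
def bohrModification [AddCommGroup G] (t : TopologicalSpace G) : TopologicalSpace G :=
  ⨅ χ : charGroup G t, TopologicalSpace.induced (χ.1 : G → Torus) inferInstance

/-- The Bohr topology of the (discrete) abelian group `X`: the initial topology
induced by all homomorphisms `X → 𝕋`. -/
def bohrDiscrete (X : Type*) [AddCommGroup X] : TopologicalSpace X :=
  ⨅ χ : X →+ Torus, TopologicalSpace.induced (χ : X → Torus) inferInstance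

/-- The extension topology `ζ̄` on `G` of a group topology `ζ` on the subgroup `H`:
its neighborhood filter at `x` is generated by the sets `x + V`, `V` a
`ζ`-neighborhood of `0` in `H`. -/
def extTopology [AddCommGroup G] (H : AddSubgroup G) (ζ : TopologicalSpace H) :
    TopologicalSpace G :=
  TopologicalSpace.mkOfNhds fun x => Filter.map (fun h : H => x + (h : G)) (@nhds H ζ 0)

/-- The subspace topology induced on a subgroup `H` by a topology `t` on `G`. -/
def restrictTopology [AddCommGroup G] (H : AddSubgroup G) (t : TopologicalSpace G) :
    TopologicalSpace H :=
  t.induced (Subtype.val : H → G)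

/-- The quotient topology on `G ⧸ H` induced by a topology `t` on `G`. -/
def quotientTopology [AddCommGroup G] (H : AddSubgroup G) (t : TopologicalSpace G) :
    TopologicalSpace (G ⧸ H) :=
  t.coinduced (QuotientAddGroup.mk : G → G ⧸ H)

/-- `H` is B-embedded in `(G, t)`: every (algebraic) character of `G ⧸ H` is
continuous in the quotient topology. -/
def IsBEmbedded [AddCommGroup G] (t : TopologicalSpace G) (H : AddSubgroup G) : Prop :=
  ∀ χ : G ⧸ H →+ Torus, @Continuous (G ⧸ H) Torus (quotientTopology H t) _ χ

/-- `t` is the finest precompact extension to `G` of the topology `ζ` on the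
subgroup `H`: `t` is a precompact Hausdorff group topology restricting to `ζ` on `H`,
and every precompact Hausdorff group topology on `G` restricting to `ζ` on `H`
is coarser than `t`. -/
def IsFinestPrecompactExtension [AddCommGroup G] (H : AddSubgroup G)
    (ζ : TopologicalSpace H) (t : TopologicalSpace G) : Prop :=
  IsPrecompactGroupTopology t ∧ restrictTopology H t = ζ ∧
    ∀ t' : TopologicalSpace G, IsPrecompactGroupTopology t' → restrictTopology H t' = ζ →
      t ≤ t'

/-- `𝕋₊`: the image of `[-1/4, 1/4]` under the quotient map `ℝ → 𝕋`. -/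
def Tplus : Set Torus := (fun x : ℝ => (x : Torus)) '' Set.Icc (-(1/4) : ℝ) (1/4)

/-- `A` is quasi-convex in `(G, t)`. -/
def IsQuasiConvex [AddCommGroup G] (t : TopologicalSpace G) (A : Set G) : Prop :=
  ∀ g ∉ A, ∃ χ : G →+ Torus, IsContChar t χ ∧ (∀ a ∈ A, χ a ∈ Tplus) ∧ χ g ∉ Tplus

/-- `(G, t)` is locally quasi-convex: `0` has a neighborhood base of
quasi-convex sets. -/
def IsLocallyQuasiConvex [AddCommGroup G] (t : TopologicalSpace G) : Prop :=
  ∀ U ∈ @nhds G t 0, ∃ V ∈ @nhds G t 0, V ⊆ U ∧ IsQuasiConvex t V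

/-- The weight of a topology: the minimal cardinality of a base. -/
def tweight {X : Type*} (t : TopologicalSpace X) : Cardinal :=
  sInf { c : Cardinal |
    ∃ B : Set (Set X), @TopologicalSpace.IsTopologicalBasis X t B ∧ c = Cardinal.mk B }

/-- `(G, t)` is maximally almost periodic: the `t`-continuous characters
separate the points of `G`. -/
def IsMAP [AddCommGroup G] (t : TopologicalSpace G) : Prop :=
  ∀ x : G, x ≠ 0 → ∃ χ : G →+ Torus, IsContChar t χ ∧ χ x ≠ 0

/-- Two topologies on `G` are compatible: they have the same continuous characters. -/
def Compatible [AddCommGroup G] (t t' : TopologicalSpace G) : Prop :=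
  ∀ χ : G →+ Torus, IsContChar t χ ↔ IsContChar t' χ

/-- `(G, t)` is a MAP-Mackey group: it is a MAP Hausdorff group topology and every
compatible MAP group topology on `G` is coarser. -/
def IsMAPMackey [AddCommGroup G] (t : TopologicalSpace G) : Prop :=
  IsHausdorffGroupTopology t ∧ IsMAP t ∧
    ∀ t' : TopologicalSpace G, @IsTopologicalAddGroup G t' _ → IsMAP t' → Compatible t t' →
      t ≤ t'

/-- `(X, t)` is a k-space: a subset is closed as soon as its intersection with every
compact subset `K` is closed in `K`. -/
def IsKSpace {X : Type*} (t : TopologicalSpace X) : Prop :=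
  ∀ A : Set X,
    (∀ K : Set X, @IsCompact X t K →
      @IsClosed K (t.induced (Subtype.val : K → X)) {x : K | (x : X) ∈ A}) →
    @IsClosed X t A

/-- `(X, t)` is pseudocompact: every continuous real-valued function is bounded. -/
def IsPseudocompact {X : Type*} (t : TopologicalSpace X) : Prop :=
  ∀ f : X → ℝ, @Continuous X ℝ t _ f → ∃ C : ℝ, ∀ x : X, |f x| ≤ C

/-- `(X, t)` is sequentially complete: every Cauchy sequence (w.r.t. the group
uniformity) converges. -/
def SeqComplete {X : Type*} [AddCommGroup X] (t : TopologicalSpace X) : Prop :=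
  ∀ x : ℕ → X, (∀ U ∈ @nhds X t 0, ∃ N : ℕ, ∀ m ≥ N, ∀ n ≥ N, x m - x n ∈ U) →
    ∃ a : X, Filter.Tendsto x Filter.atTop (@nhds X t a)

/-!
Let `τ = τ_u` and let `H` be the subgroup generated by the terms of `u`. If `ψ` is any character
of `G` vanishing on `H`, then `τ ⊓ (topology induced by ψ)` is still a precompact Hausdorff group
topology in which `u → 0`, so by maximality of `τ_u` the character `ψ` is `τ`-continuous.
Since `ℚ/ℤ` is an injective cogenerator, every `x ∉ H` is detected by such a `ψ` with values in
the countable subgroup `ℚ/ℤ ⊆ 𝕋`; the image of the connected component `C` of `0` under `ψ` is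
then a countable connected subset of `𝕋`, hence a point, so `ψ x = 0` for `x ∈ C`. Thus `C ⊆ H`
is countable, and a countable connected subset of a Hausdorff group (a Tychonoff space) is a
point.
-/

section

variable [AddCommGroup G]

def HasFiniteSmallCover (t : TopologicalSpace G) : Prop :=
  ∀ U ∈ @nhds G t 0, ∃ S : Set (Set G), S.Finite ∧ ⋃₀ S = Set.univ ∧
    ∀ A ∈ S, ∀ x ∈ A, ∀ y ∈ A, x - y ∈ U

theorem PrecompactCover.hasFiniteSmallCover {t : TopologicalSpace G}
    (ht : @IsTopologicalAddGroup G t _) (h : PrecompactCover t) : HasFiniteSmallCover t := by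
  let _ := t
  intro U hU
  obtain ⟨V, hV, hVU⟩ := exists_nhds_half_neg hU
  obtain ⟨F, hF, hcover⟩ := h V hV
  refine ⟨(fun f => {x | x - f ∈ V}) '' F, hF.image _, ?_, ?_⟩
  · refine Set.eq_univ_of_forall fun x => ?_
    obtain ⟨f, hf, hx⟩ := hcover x
    exact ⟨_, Set.mem_image_of_mem _ hf, hx⟩
  · rintro _ ⟨f, -, rfl⟩ x hx y hy
    simpa using hVU _ hx _ hy

theorem HasFiniteSmallCover.precompactCover {t : TopologicalSpace G}
    (h : HasFiniteSmallCover t) : PrecompactCover t := by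
  intro U hU
  obtain ⟨S, hS, hcover, hsmall⟩ := h U hU
  refine ⟨(fun A => Classical.epsilon (· ∈ A)) '' S, hS.image _, fun x => ?_⟩
  obtain ⟨A, hA, hx⟩ := Set.mem_sUnion.mp (hcover.symm ▸ Set.mem_univ x)
  exact ⟨_, Set.mem_image_of_mem _ hA, hsmall A hA x hx _ (Classical.epsilon_spec ⟨x, hx⟩)⟩

theorem HasFiniteSmallCover.inf {t₁ t₂ : TopologicalSpace G} (h₁ : HasFiniteSmallCover t₁)
    (h₂ : HasFiniteSmallCover t₂) : HasFiniteSmallCover (t₁ ⊓ t₂) := by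
  intro U hU
  rw [@nhds_inf G t₁ t₂, Filter.mem_inf_iff] at hU
  obtain ⟨U₁, hU₁, U₂, hU₂, rfl⟩ := hU
  obtain ⟨S₁, hS₁, hcover₁, hsmall₁⟩ := h₁ U₁ hU₁
  obtain ⟨S₂, hS₂, hcover₂, hsmall₂⟩ := h₂ U₂ hU₂
  refine ⟨Set.image2 (· ∩ ·) S₁ S₂, hS₁.image2 _ hS₂, ?_, ?_⟩
  · refine Set.eq_univ_of_forall fun x => ?_
    obtain ⟨A, hA, hxA⟩ := Set.mem_sUnion.mp (hcover₁.symm ▸ Set.mem_univ x)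
    obtain ⟨B, hB, hxB⟩ := Set.mem_sUnion.mp (hcover₂.symm ▸ Set.mem_univ x)
    exact ⟨A ∩ B, Set.mem_image2_of_mem hA hB, hxA, hxB⟩
  · rintro _ ⟨A, hA, B, hB, rfl⟩ x hx y hy
    exact ⟨hsmall₁ A hA x hx.1 y hy.1, hsmall₂ B hB x hx.2 y hy.2⟩

theorem HasFiniteSmallCover.induced {K : Type*} [AddCommGroup K] {t : TopologicalSpace K}
    (h : HasFiniteSmallCover t) (ψ : G →+ K) : HasFiniteSmallCover (t.induced ψ) := by
  intro U hU
  rw [nhds_induced, map_zero] at hU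
  obtain ⟨W, hW, hWU⟩ := hU
  obtain ⟨S, hS, hcover, hsmall⟩ := h W hW
  refine ⟨Set.preimage ψ '' S, hS.image _, ?_, ?_⟩
  · rw [Set.sUnion_image, ← Set.preimage_iUnion₂, ← Set.sUnion_eq_biUnion, hcover,
      Set.preimage_univ]
  · rintro _ ⟨A, hA, rfl⟩ x hx y hy
    exact hWU (show ψ (x - y) ∈ W by simpa using hsmall A hA _ hx _ hy)

theorem precompactCover_of_compactSpace {K : Type*} [AddCommGroup K] [t : TopologicalSpace K]
    [IsTopologicalAddGroup K] [CompactSpace K] : PrecompactCover t := by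
  intro U hU
  obtain ⟨F, hF⟩ := compact_covered_by_add_left_translates isCompact_univ
    ⟨0, mem_interior_iff_mem_nhds.mpr hU⟩
  refine ⟨-(F : Set K), F.finite_toSet.neg, fun x => ?_⟩
  obtain ⟨g, hg, hx⟩ := Set.mem_iUnion₂.mp (hF (Set.mem_univ x))
  exact ⟨-g, by simpa using hg, by simpa [add_comm] using hx⟩

theorem IsTauU.continuous_of_tendsto {K : Type*} [AddCommGroup K] [TopologicalSpace K]
    [IsTopologicalAddGroup K] [CompactSpace K] {u : ℕ → G} {τ : TopologicalSpace G}
    (h : IsTauU u τ) (ψ : G →+ K) (hψu : Tendsto (ψ ∘ u) atTop (𝓝 0)) :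
    Continuous[τ, _] ψ := by
  obtain ⟨⟨⟨hgroup, hT2⟩, hpc⟩, hu, hmax⟩ := h
  refine continuous_iff_le_induced.mpr (le_inf_iff.mp (hmax (τ ⊓ .induced ψ inferInstance)
    ⟨⟨topologicalAddGroup_inf hgroup (topologicalAddGroup_induced ψ),
      t2Space_antitone inf_le_left hT2⟩, ?_⟩ ?_)).2
  · have hK : HasFiniteSmallCover (inferInstance : TopologicalSpace K) :=
      precompactCover_of_compactSpace.hasFiniteSmallCover inferInstance
    exact ((hpc.hasFiniteSmallCover hgroup).inf (hK.induced ψ)).precompactCover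
  · rw [ConvergesToZero, @nhds_inf G τ (.induced ψ inferInstance), tendsto_inf, nhds_induced,
      map_zero, tendsto_comap_iff]
    exact ⟨hu, hψu⟩

theorem _root_.Set.Countable.isTotallyDisconnected_of_topologicalAddGroup [TopologicalSpace G]
    [IsTopologicalAddGroup G] [T2Space G] {s : Set G} (hs : s.Countable) :
    IsTotallyDisconnected s := by
  -- uniformizable and T1, hence Tychonoff; countable Tychonoff spaces are totally separated
  let _ := IsTopologicalAddGroup.rightUniformSpace G
  have : Countable s := hs
  exact totallyDisconnectedSpace_subtype_iff.mp inferInstance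

theorem _root_.AddSubgroup.countable_closure_range {ι : Type*} [Countable ι] (u : ι → G) :
    (AddSubgroup.closure (Set.range u) : Set G).Countable :=
  (Set.countable_range fun a : ι →₀ ℤ => a.sum fun i n => n • u i).mono fun x hx => by
    obtain ⟨a, ha⟩ := AddSubgroup.exists_finsupp_of_mem_closure_range u x hx
    exact ⟨a, ha.symm⟩

def ratCircleToTorus : AddCircle (1 : ℚ) →+ Torus :=
  QuotientAddGroup.map _ _ (Rat.castHom ℝ).toAddMonoidHom <| by
    rintro _ ⟨n, rfl⟩
    exact ⟨n, by simp⟩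

theorem ratCircleToTorus_injective : Function.Injective ratCircleToTorus := by
  refine (injective_iff_map_eq_zero _).mpr fun a ha => ?_
  induction a using QuotientAddGroup.induction_on with
  | H q =>
    obtain ⟨n, hn⟩ := (AddCircle.coe_eq_zero_iff (1 : ℝ)).mp ha
    have hnq : ((n : ℚ) : ℝ) = q := by simpa using hn
    exact (AddCircle.coe_eq_zero_iff (1 : ℚ)).mpr ⟨n, by rw [zsmul_one]; exact_mod_cast hnq⟩

theorem _root_.AddSubgroup.exists_addMonoidHom_torus_of_notMem (H : AddSubgroup G) {x : G}
    (hx : x ∉ H) :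
    ∃ ψ : G →+ Torus, (∀ h ∈ H, ψ h = 0) ∧ ψ x ≠ 0 ∧ (Set.range ψ).Countable := by
  obtain ⟨χ, hχ⟩ := CharacterModule.exists_character_apply_ne_zero_of_ne_zero
    (mt (QuotientAddGroup.eq_zero_iff x).mp hx)
  let ψ : G →+ Torus :=
    ratCircleToTorus.comp ((AddMonoidHomClass.toAddMonoidHom χ).comp (QuotientAddGroup.mk' H))
  have : Countable (AddCircle (1 : ℚ)) := Quotient.countable
  refine ⟨ψ, fun h hh => ?_, fun h0 => hχ (ratCircleToTorus_injective ?_), ?_⟩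
  · simp [ψ, (QuotientAddGroup.eq_zero_iff h).mpr hh]
  · simpa [ψ] using h0
  · exact (Set.countable_range ratCircleToTorus).mono <| by rintro _ ⟨y, rfl⟩; exact ⟨_, rfl⟩

theorem connectedComponent_zero_subset [TopologicalSpace G] (H : AddSubgroup G)
    (hH : ∀ ψ : G →+ Torus, (∀ h ∈ H, ψ h = 0) → Continuous ψ) :
    connectedComponent (0 : G) ⊆ H := by
  intro x hx
  by_contra hxH
  obtain ⟨ψ, hψH, hψx, hψc⟩ := H.exists_addMonoidHom_torus_of_notMem hxH
  have hconn : IsPreconnected (ψ '' connectedComponent 0) :=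
    isPreconnected_connectedComponent.image ψ (hH ψ hψH).continuousOn
  have hsub := (hψc.mono (Set.image_subset_range _ _)).isTotallyDisconnected _ subset_rfl hconn
  exact hψx (hsub ⟨x, hx, rfl⟩ ⟨0, mem_connectedComponent, map_zero ψ⟩)

end

/-- Every ss-characterized precompact Hausdorff abelian group is
hereditarily disconnected: the connected component of `0` is trivial. -/
theorem stmt16 {G : Type*} [AddCommGroup G] (τ : TopologicalSpace G)
    (hss : SSCharacterized τ) :
    @connectedComponent G τ 0 = {0} := by
  obtain ⟨u, hτu⟩ := hss
  have ⟨⟨⟨hgroup, hT2⟩, _⟩, _⟩ := hτu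
  let H := AddSubgroup.closure (Set.range u)
  have hCH : connectedComponent (0 : G) ⊆ H := connectedComponent_zero_subset H fun ψ hψ =>
    hτu.continuous_of_tendsto ψ <| by
      simp [Function.comp_def, hψ _ (AddSubgroup.subset_closure (Set.mem_range_self _))]
  have hC : (connectedComponent (0 : G)).Countable :=
    (AddSubgroup.countable_closure_range u).mono hCH
  exact (hC.isTotallyDisconnected_of_topologicalAddGroup _ subset_rfl
    isPreconnected_connectedComponent).eq_singleton_of_mem mem_connectedComponent

end SSChar
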